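/- arXiv:2203.06735 — 5 statements merged into one kernel-verified Lean document; each statement's English description precedes it below -/
import Mathlib

section
/- Let β, η > 0, let F⁰ : ℝ^d → ℝ be β-smooth, let f¹ : ℝ^d → ℝ be convex, and set F := F⁰ + f¹. Fix w, d' ∈ ℝ^d and let y := prox_{ηf¹}(w − η d'). Then for all z ∈ ℝ^d: F(y) ≤ F(z) + ⟨y − z, ∇F⁰(w) − d'⟩ + (β/2 − 1/(2η))‖y − w‖² + (β/2 + 1/(2η))‖z − w‖² − (1/(2η))‖y − z‖². -/
/-!
Two classical inequalities are combined. The descent lemma for a function with `β`-Lipschitz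
gradient bounds `F⁰(y)` from above and `F⁰(z)` from below by the linearisation of `F⁰` at `w`,
up to `β/2` times the squared distances to `w`. The optimality of the proximal point
`y = prox_{ηf¹}(w - η d')` against the points of the segment `[y, z]` gives
`η (f¹ y - f¹ z) ≤ ⟪y - w + η d', z - y⟫`, and the polarisation identity
`2 ⟪y - w, z - y⟫ = ‖z - w‖² - ‖z - y‖² - ‖y - w‖²` turns this into the quadratic terms of the claim.
-/

open scoped RealInnerProductSpace

section

variable {E F : Type*} [NormedAddCommGroup E] [NormedSpace ℝ E]
  [NormedAddCommGroup F] [NormedSpace ℝ F]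

theorem norm_sub_sub_fderiv_le_of_lipschitz {f : E → F} {f' : E → E →L[ℝ] F} {β : ℝ}
    (hf : ∀ x, HasFDerivAt f (f' x) x) (hf' : ∀ x y, ‖f' x - f' y‖ ≤ β * ‖x - y‖) (a b : E) :
    ‖f a - f b - f' b (a - b)‖ ≤ β / 2 * ‖a - b‖ ^ 2 := by
  set v := a - b
  set g : ℝ → F := fun t => f (b + t • v) - f b - t • f' b v
  have hg : ∀ t, HasDerivAt g (f' (b + t • v) v - f' b v) t := fun t => by
    have hline : HasDerivAt (fun s : ℝ => b + s • v) v t := by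
      simpa using ((hasDerivAt_id t).smul_const v).const_add b
    have := (((hf _).comp_hasDerivAt t hline).sub_const (f b)).sub
      ((hasDerivAt_id t).smul_const (f' b v))
    exact this.congr_deriv (by simp)
  have hB : ∀ t, HasDerivAt (fun t : ℝ => β / 2 * ‖v‖ ^ 2 * t ^ 2) (β * ‖v‖ ^ 2 * t) t :=
    fun t => ((hasDerivAt_pow 2 t).const_mul (β / 2 * ‖v‖ ^ 2)).congr_deriv (by ring)
  have bound : ∀ t ∈ Set.Ico (0 : ℝ) 1, ‖f' (b + t • v) v - f' b v‖ ≤ β * ‖v‖ ^ 2 * t := by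
    rintro t ⟨ht, -⟩
    calc ‖f' (b + t • v) v - f' b v‖ = ‖(f' (b + t • v) - f' b) v‖ := rfl
      _ ≤ ‖f' (b + t • v) - f' b‖ * ‖v‖ := ContinuousLinearMap.le_opNorm _ _
      _ ≤ β * ‖t • v‖ * ‖v‖ := by
        gcongr
        simpa using hf' (b + t • v) b
      _ = β * ‖v‖ ^ 2 * t := by rw [norm_smul, Real.norm_of_nonneg ht]; ring
  have hg1 := image_norm_le_of_norm_deriv_right_le_deriv_boundary
    (fun t _ => (hg t).continuousAt.continuousWithinAt) (fun t _ => (hg t).hasDerivWithinAt)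
    (by simp [g]) hB bound (Set.right_mem_Icc.2 zero_le_one)
  simpa [g, v] using hg1

end

section

variable {E : Type*} [NormedAddCommGroup E] [InnerProductSpace ℝ E]

theorem abs_sub_sub_inner_gradient_le [CompleteSpace E] {f : E → ℝ} {β : ℝ}
    (hf : Differentiable ℝ f) (hL : ∀ x y, ‖gradient f x - gradient f y‖ ≤ β * ‖x - y‖)
    (a b : E) : |f a - f b - ⟪gradient f b, a - b⟫| ≤ β / 2 * ‖a - b‖ ^ 2 := by
  have := norm_sub_sub_fderiv_le_of_lipschitz (f' := fderiv ℝ f) (β := β)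
    (fun x => (hf x).hasFDerivAt) (fun x y => ?_) a b
  · simpa [inner_gradient_left] using this
  · rw [← toDual_gradient, ← toDual_gradient, ← map_sub, LinearIsometryEquiv.norm_map]
    exact hL x y

theorem sub_le_inner_of_forall_add_sq_le {g : E → ℝ} (hg : ConvexOn ℝ Set.univ g) {u y : E}
    (hy : ∀ v, g y + 1 / 2 * ‖y - u‖ ^ 2 ≤ g v + 1 / 2 * ‖v - u‖ ^ 2) (z : E) :
    g y - g z ≤ ⟪y - u, z - y⟫ := by
  set X := ⟪y - u, z - y⟫
  set Q := ‖z - y‖ ^ 2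
  have step : ∀ t ∈ Set.Ioc (0 : ℝ) 1, g y - g z ≤ X + t / 2 * Q := by
    rintro t ⟨ht0, ht1⟩
    have hconv : g (y + t • (z - y)) ≤ (1 - t) * g y + t * g z := by
      have := hg.2 (Set.mem_univ y) (Set.mem_univ z) (sub_nonneg.2 ht1) ht0.le (by ring)
      rwa [show (1 - t) • y + t • z = y + t • (z - y) by module] at this
    have hnorm : ‖y + t • (z - y) - u‖ ^ 2 = ‖y - u‖ ^ 2 + 2 * t * X + t ^ 2 * Q := by
      rw [show y + t • (z - y) - u = (y - u) + t • (z - y) by abel, norm_add_sq_real,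
        real_inner_smul_right, norm_smul, mul_pow, Real.norm_eq_abs, sq_abs]
      ring
    have hmin := hy (y + t • (z - y))
    rw [hnorm] at hmin
    have key : t * (g y - g z) ≤ t * (X + t / 2 * Q) := by nlinarith
    exact le_of_mul_le_mul_left key ht0
  have hlim : Filter.Tendsto (fun t : ℝ => X + t / 2 * Q) (nhdsWithin 0 (Set.Ioi 0)) (nhds X) := by
    have : Continuous fun t : ℝ => X + t / 2 * Q := by fun_prop
    simpa using (this.tendsto 0).mono_left nhdsWithin_le_nhds
  exact ge_of_tendsto hlim (Filter.eventually_of_mem (Ioc_mem_nhdsGT zero_lt_one) step)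

theorem prox_three_point {f : E → ℝ} (hf : ConvexOn ℝ Set.univ f) {η : ℝ} (hη : 0 < η)
    {w d y : E}
    (hy : ∀ v, η * f y + 1 / 2 * ‖y - (w - η • d)‖ ^ 2 ≤ η * f v + 1 / 2 * ‖v - (w - η • d)‖ ^ 2)
    (z : E) :
    f y - f z ≤ ⟪d, z - y⟫ + 1 / (2 * η) * (‖z - w‖ ^ 2 - ‖z - y‖ ^ 2 - ‖y - w‖ ^ 2) := by
  have hopt := sub_le_inner_of_forall_add_sq_le (hf.smul hη.le) hy z
  have hsplit : ⟪y - (w - η • d), z - y⟫ = ⟪y - w, z - y⟫ + η * ⟪d, z - y⟫ := by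
    rw [show y - (w - η • d) = (y - w) + η • d by abel, inner_add_left, real_inner_smul_left]
  have hpolar : 2 * ⟪y - w, z - y⟫ = ‖z - w‖ ^ 2 - ‖z - y‖ ^ 2 - ‖y - w‖ ^ 2 := by
    rw [show z - w = (z - y) + (y - w) by abel, norm_add_sq_real, real_inner_comm]
    ring
  simp only [smul_eq_mul] at hopt
  calc f y - f z ≤ (⟪y - w, z - y⟫ + η * ⟪d, z - y⟫) / η := by
        rw [le_div_iff₀ hη]; linarith
    _ = ⟪d, z - y⟫ + 1 / (2 * η) * (‖z - w‖ ^ 2 - ‖z - y‖ ^ 2 - ‖y - w‖ ^ 2) := by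
        rw [← hpolar]; field_simp; ring

end

theorem stmt3_general {d : ℕ} (β η : ℝ) (hη : 0 < η)
    (F0 f1 : EuclideanSpace ℝ (Fin d) → ℝ)
    (hdiff : Differentiable ℝ F0)
    (hsmooth : ∀ x y, ‖gradient F0 x - gradient F0 y‖ ≤ β * ‖x - y‖)
    (hconv : ConvexOn ℝ Set.univ f1)
    (w d' y : EuclideanSpace ℝ (Fin d))
    (hy : ∀ v, η * f1 y + (1 / 2) * ‖y - (w - η • d')‖ ^ 2
        ≤ η * f1 v + (1 / 2) * ‖v - (w - η • d')‖ ^ 2) :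
    ∀ z, F0 y + f1 y ≤ F0 z + f1 z + ⟪y - z, gradient F0 w - d'⟫
        + (β / 2 - 1 / (2 * η)) * ‖y - w‖ ^ 2
        + (β / 2 + 1 / (2 * η)) * ‖z - w‖ ^ 2
        - (1 / (2 * η)) * ‖y - z‖ ^ 2 := by
  intro z
  have hFy := (abs_le.mp (abs_sub_sub_inner_gradient_le hdiff hsmooth y w)).2
  have hFz := (abs_le.mp (abs_sub_sub_inner_gradient_le hdiff hsmooth z w)).1
  have hf := prox_three_point hconv hη hy z
  have hinner : ⟪y - z, gradient F0 w - d'⟫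
      = ⟪gradient F0 w, y - w⟫ - ⟪gradient F0 w, z - w⟫ + ⟪d', z - y⟫ := by
    simp only [inner_sub_right, real_inner_comm (gradient F0 w), real_inner_comm d']
    ring
  rw [hinner, norm_sub_rev y z]
  linarith

/-- Key proximal descent lemma: for `β`-smooth `F⁰`, convex `f¹`, `F = F⁰ + f¹`, and
`y = prox_{ηf¹}(w - η d')`, for all `z`:
`F(y) ≤ F(z) + ⟪y - z, ∇F⁰(w) - d'⟫ + (β/2 - 1/(2η))‖y-w‖² + (β/2 + 1/(2η))‖z-w‖²
  - (1/(2η))‖y-z‖²`. -/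
theorem stmt3 {d : ℕ} (β η : ℝ) (hβ : 0 < β) (hη : 0 < η)
    (F0 f1 : EuclideanSpace ℝ (Fin d) → ℝ)
    (hdiff : Differentiable ℝ F0)
    (hsmooth : ∀ x y, ‖gradient F0 x - gradient F0 y‖ ≤ β * ‖x - y‖)
    (hconv : ConvexOn ℝ Set.univ f1)
    (w d' y : EuclideanSpace ℝ (Fin d))
    (hy : ∀ v, η * f1 y + (1 / 2) * ‖y - (w - η • d')‖ ^ 2
        ≤ η * f1 v + (1 / 2) * ‖v - (w - η • d')‖ ^ 2) :
    ∀ z, F0 y + f1 y ≤ F0 z + f1 z + ⟪y - z, gradient F0 w - d'⟫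
        + (β / 2 - 1 / (2 * η)) * ‖y - w‖ ^ 2
        + (β / 2 + 1 / (2 * η)) * ‖z - w‖ ^ 2
        - (1 / (2 * η)) * ‖y - z‖ ^ 2 :=
  stmt3_general β η hη F0 f1 hdiff hsmooth hconv w d' y hy
end

section
/- Let β > 0, μ ≥ 0, let F⁰ : ℝ^d → ℝ be β-smooth, let f¹ : ℝ^d → ℝ be convex, set F := F⁰ + f¹, and suppose F is bounded below with F* := inf_{w'∈ℝ^d} F(w'). For α > 0 define D_{f¹}(w, α) := −2α · inf_{y∈ℝ^d} [⟨∇F⁰(w), y − w⟩ + (α/2)‖y − w‖² + f¹(y) − f¹(w)]. Fix w ∈ ℝ^d and suppose the proximal-PL inequality μ·(F(w) − F*) ≤ (1/2)·D_{f¹}(w, β) holds at w. Let 0 < η ≤ 1/β and ŵ := prox_{ηf¹}(w − η ∇F⁰(w)). Then F(ŵ) ≤ F(w) − η·μ·(F(w) − F*). -/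
/-!
Write `m_α(y) = ⟪∇F⁰(w), y - w⟫ + (α/2)‖y - w‖² + f¹(y) - f¹(w)`, so that
`D_{f¹}(w, α) = -2α inf m_α`. Completing the square shows that `ŵ` minimises `m_{1/η}`.
Comparing `ŵ` with the point `w + ηβ(y - w)` and using convexity of `f¹` gives
`m_{1/η}(ŵ) ≤ ηβ m_β(y)` for every `y`. The descent lemma together with `β ≤ 1/η` gives
`F(ŵ) ≤ F(w) + m_{1/η}(ŵ) ≤ F(w) + ηβ inf m_β`, and the proximal-PL inequality says
`β inf m_β ≤ -μ(F(w) - F*)`.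
-/

open scoped RealInnerProductSpace

variable {E : Type*} [NormedAddCommGroup E] [InnerProductSpace ℝ E]

theorem le_add_inner_gradient_add_sq_of_lipschitz_gradient [CompleteSpace E] {F : E → ℝ}
    {β : ℝ} (hF : Differentiable ℝ F)
    (hβ : ∀ x y, ‖gradient F x - gradient F y‖ ≤ β * ‖x - y‖)
    (x y : E) : F y ≤ F x + ⟪gradient F x, y - x⟫ + β / 2 * ‖y - x‖ ^ 2 := by
  set v := y - x
  -- the gap between `F` and its quadratic upper model along the segment; Lipschitz continuity of
  -- the gradient makes it nonincreasing
  set φ : ℝ → ℝ := fun t => F (x + t • v) - t * ⟪gradient F x, v⟫ - β / 2 * t ^ 2 * ‖v‖ ^ 2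
  have hφ : ∀ t, HasDerivAt φ
      (⟪gradient F (x + t • v), v⟫ - ⟪gradient F x, v⟫ - β * t * ‖v‖ ^ 2) t := by
    intro t
    have hline : HasDerivAt (fun s : ℝ => x + s • v) v t := by
      simpa using ((hasDerivAt_id t).smul_const v).const_add x
    refine (((hF _).hasGradientAt.hasFDerivAt.comp_hasDerivAt t hline).sub
      ((hasDerivAt_id t).mul_const ⟪gradient F x, v⟫) |>.sub
      (((hasDerivAt_pow 2 t).const_mul (β / 2)).mul_const (‖v‖ ^ 2))).congr_deriv ?_
    simp only [InnerProductSpace.toDual_apply_apply]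
    ring
  have hφ' : ∀ t ∈ interior (Set.Ici (0 : ℝ)),
      ⟪gradient F (x + t • v), v⟫ - ⟪gradient F x, v⟫ - β * t * ‖v‖ ^ 2 ≤ 0 := by
    intro t ht
    rw [interior_Ici, Set.mem_Ioi] at ht
    refine sub_nonpos.mpr ?_
    calc ⟪gradient F (x + t • v), v⟫ - ⟪gradient F x, v⟫
        = ⟪gradient F (x + t • v) - gradient F x, v⟫ := (inner_sub_left ..).symm
      _ ≤ ‖gradient F (x + t • v) - gradient F x‖ * ‖v‖ := real_inner_le_norm ..
      _ ≤ β * ‖t • v‖ * ‖v‖ := by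
          gcongr
          simpa using hβ (x + t • v) x
      _ = β * t * ‖v‖ ^ 2 := by rw [norm_smul, Real.norm_of_nonneg ht.le]; ring
  have hanti : AntitoneOn φ (Set.Ici 0) :=
    antitoneOn_of_hasDerivWithinAt_nonpos (convex_Ici 0)
      (fun t _ => (hφ t).continuousAt.continuousWithinAt)
      (fun t _ => (hφ t).hasDerivWithinAt) hφ'
  have h10 : φ 1 ≤ φ 0 := hanti Set.self_mem_Ici (Set.mem_Ici.mpr zero_le_one) zero_le_one
  simp only [φ, v, one_smul, zero_smul, add_zero, add_sub_cancel] at h10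
  linarith

noncomputable def proxModel (g w : E) (f : E → ℝ) (α : ℝ) (y : E) : ℝ :=
  ⟪g, y - w⟫ + α / 2 * ‖y - w‖ ^ 2 + f y - f w

section proxModel

variable {g w : E} {f : E → ℝ}

theorem proxModel_mono {α α' : ℝ} (h : α ≤ α') (y : E) :
    proxModel g w f α y ≤ proxModel g w f α' y := by
  unfold proxModel
  gcongr

theorem proxModel_add_smul_sub_le (hf : ConvexOn ℝ Set.univ f) {t : ℝ} (ht₀ : 0 ≤ t)
    (ht₁ : t ≤ 1) (α : ℝ) (y : E) :
    proxModel g w f α (w + t • (y - w)) ≤ t * proxModel g w f (t * α) y := by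
  have hconv : f (w + t • (y - w)) ≤ (1 - t) * f w + t * f y := by
    rw [show w + t • (y - w) = (1 - t) • w + t • y by module]
    exact hf.2 (Set.mem_univ w) (Set.mem_univ y) (by linarith) ht₀ (by ring)
  simp only [proxModel, add_sub_cancel_left, inner_smul_right, norm_smul,
    Real.norm_of_nonneg ht₀]
  linarith

theorem mul_add_half_norm_sq_eq_mul_proxModel {η : ℝ} (hη : η ≠ 0) (v : E) :
    η * f v + 1 / 2 * ‖v - (w - η • g)‖ ^ 2
      = η * proxModel g w f η⁻¹ v + η * f w + η ^ 2 / 2 * ‖g‖ ^ 2 := by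
  rw [show v - (w - η • g) = (v - w) + η • g by abel, norm_add_sq_real, inner_smul_right,
    real_inner_comm, norm_smul, Real.norm_eq_abs, mul_pow, sq_abs, proxModel]
  field_simp
  ring

theorem proxModel_le_of_prox_le {η : ℝ} (hη : 0 < η) {wh : E}
    (hwh : ∀ v, η * f wh + 1 / 2 * ‖wh - (w - η • g)‖ ^ 2
      ≤ η * f v + 1 / 2 * ‖v - (w - η • g)‖ ^ 2) (v : E) :
    proxModel g w f η⁻¹ wh ≤ proxModel g w f η⁻¹ v := by
  have := hwh v
  simp only [mul_add_half_norm_sq_eq_mul_proxModel hη.ne'] at this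
  exact le_of_mul_le_mul_left (by linarith) hη

theorem proxModel_le_mul_iInf (hf : ConvexOn ℝ Set.univ f) {η β : ℝ} (hη : 0 < η)
    (hβ : 0 ≤ β) (hηβ : η * β ≤ 1) {wh : E}
    (hwh : ∀ v, proxModel g w f η⁻¹ wh ≤ proxModel g w f η⁻¹ v) :
    proxModel g w f η⁻¹ wh ≤ η * β * ⨅ y, proxModel g w f β y := by
  rw [Real.mul_iInf_of_nonneg (by positivity)]
  refine le_ciInf fun y => (hwh (w + (η * β) • (y - w))).trans ?_
  have := proxModel_add_smul_sub_le (g := g) (w := w) hf (by positivity) hηβ η⁻¹ y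
  rwa [show η * β * η⁻¹ = β by field_simp] at this

end proxModel

theorem stmt9_general {d : ℕ} (β μ η : ℝ) (hβ : 0 < β)
    (hη0 : 0 < η) (hη : η ≤ 1 / β)
    (F0 f1 : EuclideanSpace ℝ (Fin d) → ℝ)
    (hdiff : Differentiable ℝ F0)
    (hsmooth : ∀ x y, ‖gradient F0 x - gradient F0 y‖ ≤ β * ‖x - y‖)
    (hconv : ConvexOn ℝ Set.univ f1)
    (Fstar : ℝ)
    (w wh : EuclideanSpace ℝ (Fin d))
    (hPL : μ * (F0 w + f1 w - Fstar) ≤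
      (1 / 2) * (-2 * β *
        ⨅ y, (⟪gradient F0 w, y - w⟫ + (β / 2) * ‖y - w‖ ^ 2 + f1 y - f1 w)))
    (hwh : ∀ v, η * f1 wh + (1 / 2) * ‖wh - (w - η • gradient F0 w)‖ ^ 2
        ≤ η * f1 v + (1 / 2) * ‖v - (w - η • gradient F0 w)‖ ^ 2) :
    F0 wh + f1 wh ≤ F0 w + f1 w - η * μ * (F0 w + f1 w - Fstar) := by
  set m := proxModel (gradient F0 w) w f1
  have hηβ : η * β ≤ 1 := by rwa [le_div_iff₀ hβ] at hη
  have hβη : β ≤ η⁻¹ := (le_inv_comm₀ hη0 hβ).mp (by rwa [one_div] at hη)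
  have hdesc : F0 wh + f1 wh ≤ F0 w + f1 w + m β wh := by
    have := le_add_inner_gradient_add_sq_of_lipschitz_gradient hdiff hsmooth w wh
    simp only [m, proxModel]
    linarith
  have hPL' : η * β * ⨅ y, m β y ≤ -(η * μ * (F0 w + f1 w - Fstar)) := by
    change μ * _ ≤ 1 / 2 * (-2 * β * ⨅ y, m β y) at hPL
    linarith [mul_le_mul_of_nonneg_left hPL hη0.le]
  calc F0 wh + f1 wh ≤ F0 w + f1 w + m η⁻¹ wh :=
        hdesc.trans (by gcongr; exact proxModel_mono hβη wh)
    _ ≤ F0 w + f1 w + η * β * ⨅ y, m β y := by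
        gcongr
        exact proxModel_le_mul_iInf hconv hη0 hβ.le hηβ (proxModel_le_of_prox_le hη0 hwh)
    _ ≤ _ := by linarith

/-- Proximal-PL descent: for `β`-smooth `F⁰`, convex `f¹`, `F = F⁰ + f¹` bounded below
with infimum `F*`, if the proximal-PL inequality `μ(F(w) - F*) ≤ (1/2) D_{f¹}(w, β)`
holds at `w` and `wh = prox_{ηf¹}(w - η ∇F⁰(w))` with `0 < η ≤ 1/β`, then
`F(wh) ≤ F(w) - ημ(F(w) - F*)`. -/
theorem stmt9 {d : ℕ} (β μ η : ℝ) (hβ : 0 < β) (hμ : 0 ≤ μ)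
    (hη0 : 0 < η) (hη : η ≤ 1 / β)
    (F0 f1 : EuclideanSpace ℝ (Fin d) → ℝ)
    (hdiff : Differentiable ℝ F0)
    (hsmooth : ∀ x y, ‖gradient F0 x - gradient F0 y‖ ≤ β * ‖x - y‖)
    (hconv : ConvexOn ℝ Set.univ f1)
    (hbdd : BddBelow (Set.range fun v => F0 v + f1 v))
    (Fstar : ℝ) (hFstar : Fstar = ⨅ v, (F0 v + f1 v))
    (w wh : EuclideanSpace ℝ (Fin d))
    (hPL : μ * (F0 w + f1 w - Fstar) ≤
      (1 / 2) * (-2 * β *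
        ⨅ y, (⟪gradient F0 w, y - w⟫ + (β / 2) * ‖y - w‖ ^ 2 + f1 y - f1 w)))
    (hwh : ∀ v, η * f1 wh + (1 / 2) * ‖wh - (w - η • gradient F0 w)‖ ^ 2
        ≤ η * f1 v + (1 / 2) * ‖v - (w - η • gradient F0 w)‖ ^ 2) :
    F0 wh + f1 wh ≤ F0 w + f1 w - η * μ * (F0 w + f1 w - Fstar) :=
  stmt9_general β μ η hβ hη0 hη F0 f1 hdiff hsmooth hconv Fstar w wh hPL hwh
end

section
/- Let β > 0, μ ≥ 0, let F⁰ : ℝ^d → ℝ be β-smooth, let f¹ : ℝ^d → ℝ be convex, set F := F⁰ + f¹, and suppose F is bounded below with F* := inf_{w'∈ℝ^d} F(w'). Fix w ∈ ℝ^d and suppose the proximal-PL inequality μ·(F(w) − F*) ≤ −β · inf_{y∈ℝ^d} [⟨∇F⁰(w), y − w⟩ + (β/2)‖y − w‖² + f¹(y) − f¹(w)] holds at w. For any u ∈ ℝ^d (a noise/perturbation vector), let w⁺ := prox_{(1/(2β)) f¹}(w − (1/(2β))(∇F⁰(w) + u)) be the noisy proximal gradient step. Then F(w⁺) − F* ≤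 (1 − μ/(2β))·(F(w) − F*) + ‖u‖²/(2β). -/
/-!
By the descent lemma, `F(w⁺)` is at most the linearised model `F⁰(w) + ⟪∇F⁰(w), w⁺ - w⟫ +
(β/2)‖w⁺ - w‖² + f¹(w⁺)`, and `w⁺` minimises `⟪∇F⁰(w) + u, · - w⟫ + β‖· - w‖² + f¹`, with
quadratic growth `(β/2)‖· - w⁺‖²` coming from midpoint convexity. Comparing `w⁺` with the
midpoint of `w` and an arbitrary `y`, and absorbing the noise term `⟪u, m - w⁺⟫` by Young's
inequality, gives `2 (F(w⁺) - F(w) - ‖u‖²/(2β)) ≤ ⟪∇F⁰(w), y - w⟫ + (β/2)‖y - w‖² + f¹(y) - f¹(w)`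
for every `y`; the proximal-PL inequality bounds the infimum of the right side by
`-μ (F(w) - F*)/β`.
-/

open scoped RealInnerProductSpace

open Set

variable {E : Type*} [NormedAddCommGroup E] [InnerProductSpace ℝ E]

section Descent

variable [CompleteSpace E]

theorem hasDerivAt_comp_add_smul_of_hasGradientAt {F : E → ℝ} {g x v : E} {t : ℝ}
    (hF : HasGradientAt F g (x + t • v)) :
    HasDerivAt (fun s : ℝ => F (x + s • v)) ⟪g, v⟫ t := by
  have hline : HasDerivAt (fun s : ℝ => x + s • v) v t := by
    simpa using ((hasDerivAt_id t).smul_const v).const_add x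
  exact (hF.hasFDerivAt.comp_hasDerivAt t hline).congr_deriv
    (by simp [InnerProductSpace.toDual_apply_apply])

theorem inner_gradient_add_smul_le {F : E → ℝ} {β : ℝ}
    (hsmooth : ∀ x y, ‖gradient F x - gradient F y‖ ≤ β * ‖x - y‖) (x v : E) {t : ℝ}
    (ht : 0 ≤ t) :
    ⟪gradient F (x + t • v), v⟫ ≤ ⟪gradient F x, v⟫ + β * t * ‖v‖ ^ 2 := by
  have hlip : ‖gradient F (x + t • v) - gradient F x‖ ≤ β * t * ‖v‖ := by
    simpa [norm_smul, abs_of_nonneg ht, mul_assoc] using hsmooth (x + t • v) x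
  calc ⟪gradient F (x + t • v), v⟫
      = ⟪gradient F x, v⟫ + ⟪gradient F (x + t • v) - gradient F x, v⟫ := by
        rw [inner_sub_left]; ring
    _ ≤ ⟪gradient F x, v⟫ + ‖gradient F (x + t • v) - gradient F x‖ * ‖v‖ := by
        gcongr; exact real_inner_le_norm _ _
    _ ≤ ⟪gradient F x, v⟫ + β * t * ‖v‖ * ‖v‖ := by gcongr
    _ = ⟪gradient F x, v⟫ + β * t * ‖v‖ ^ 2 := by ring

theorem le_add_inner_gradient_add_norm_sq {F : E → ℝ} {β : ℝ} (hF : Differentiable ℝ F)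
    (hsmooth : ∀ x y, ‖gradient F x - gradient F y‖ ≤ β * ‖x - y‖) (x y : E) :
    F y ≤ F x + ⟪gradient F x, y - x⟫ + β / 2 * ‖y - x‖ ^ 2 := by
  set v := y - x
  have hf (t : ℝ) : HasDerivAt (fun s : ℝ => F (x + s • v)) ⟪gradient F (x + t • v), v⟫ t :=
    hasDerivAt_comp_add_smul_of_hasGradientAt (hF _).hasGradientAt
  have hB (t : ℝ) : HasDerivAt (fun s : ℝ => F x + s * ⟪gradient F x, v⟫ + β / 2 * s ^ 2 * ‖v‖ ^ 2)
      (⟪gradient F x, v⟫ + β * t * ‖v‖ ^ 2) t := by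
    have hlin := ((hasDerivAt_id t).mul_const ⟪gradient F x, v⟫).const_add (F x)
    have hquad := ((hasDerivAt_pow 2 t).const_mul (β / 2)).mul_const (‖v‖ ^ 2)
    exact (hlin.add hquad).congr_deriv
      (by simp only [one_mul, Nat.cast_ofNat, Nat.add_one_sub_one, pow_one]; ring)
  have hbound := image_le_of_deriv_right_le_deriv_boundary (a := 0) (b := 1)
    (fun t _ => (hf t).continuousAt.continuousWithinAt) (fun t _ => (hf t).hasDerivWithinAt)
    (by simp) (fun t _ => (hB t).continuousAt.continuousWithinAt)
    (fun t _ => (hB t).hasDerivWithinAt)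
    (fun t ht => inner_gradient_add_smul_le hsmooth x v ht.1) (right_mem_Icc.2 zero_le_one)
  simpa [v] using hbound

end Descent

theorem real_inner_le_half_mul_sq_add_sq_div {β : ℝ} (hβ : 0 < β) (u v : E) :
    ⟪u, v⟫ ≤ β / 2 * ‖v‖ ^ 2 + ‖u‖ ^ 2 / (2 * β) := by
  have hyoung : ‖u‖ * ‖v‖ ≤ β / 2 * ‖v‖ ^ 2 + ‖u‖ ^ 2 / (2 * β) := by
    calc ‖u‖ * ‖v‖
        = β / 2 * ‖v‖ ^ 2 + ‖u‖ ^ 2 / (2 * β) - (β * ‖v‖ - ‖u‖) ^ 2 / (2 * β) := by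
          field_simp; ring
      _ ≤ β / 2 * ‖v‖ ^ 2 + ‖u‖ ^ 2 / (2 * β) := sub_le_self _ (by positivity)
  exact (real_inner_le_norm u v).trans hyoung

theorem ConvexOn.map_half_smul_add_half_smul_le {s : Set E} {f : E → ℝ} (hf : ConvexOn ℝ s f)
    {x y : E} (hx : x ∈ s) (hy : y ∈ s) :
    f ((1 / 2 : ℝ) • x + (1 / 2 : ℝ) • y) ≤ 1 / 2 * f x + 1 / 2 * f y := by
  simpa only [smul_eq_mul] using hf.2 hx hy (by norm_num : (0 : ℝ) ≤ 1 / 2)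
    (by norm_num : (0 : ℝ) ≤ 1 / 2) (by norm_num)

theorem two_mul_prox_objective_eq {β : ℝ} (hβ : 0 < β) (w a v : E) (f : E → ℝ) :
    2 * β * (1 / (2 * β) * f v + 1 / 2 * ‖v - (w - (1 / (2 * β)) • a)‖ ^ 2)
      = ⟪a, v - w⟫ + β * ‖v - w‖ ^ 2 + f v + ‖a‖ ^ 2 / (4 * β) := by
  rw [show v - (w - (1 / (2 * β)) • a) = (v - w) + (1 / (2 * β)) • a by abel,
    norm_add_sq_real, real_inner_smul_right, norm_smul, mul_pow, Real.norm_eq_abs, sq_abs,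
    real_inner_comm]
  field_simp
  ring

/-- `x = prox_{η f}(c)`. -/
def IsProxPoint (η : ℝ) (f : E → ℝ) (c x : E) : Prop :=
  ∀ v, η * f x + 1 / 2 * ‖x - c‖ ^ 2 ≤ η * f v + 1 / 2 * ‖v - c‖ ^ 2

namespace IsProxPoint

variable {f : E → ℝ} {η : ℝ} {c x : E}

theorem add_quarter_norm_sq_le (hx : IsProxPoint η f c x) (hf : ConvexOn ℝ univ f)
    (hη : 0 ≤ η) (z : E) :
    η * f x + 1 / 2 * ‖x - c‖ ^ 2 + 1 / 4 * ‖x - z‖ ^ 2 ≤ η * f z + 1 / 2 * ‖z - c‖ ^ 2 := by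
  have hmid := hf.map_half_smul_add_half_smul_le (mem_univ x) (mem_univ z)
  have hpar : ‖(1 / 2 : ℝ) • x + (1 / 2 : ℝ) • z - c‖ ^ 2
      = 1 / 2 * ‖x - c‖ ^ 2 + 1 / 2 * ‖z - c‖ ^ 2 - 1 / 4 * ‖x - z‖ ^ 2 := by
    have h := parallelogram_law_with_norm ℝ (x - c) (z - c)
    rw [show x - c + (z - c) = (2 : ℝ) • ((1 / 2 : ℝ) • x + (1 / 2 : ℝ) • z - c) by module,
      show x - c - (z - c) = x - z by abel, norm_smul] at h
    norm_num at h
    linarith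
  have := hx ((1 / 2 : ℝ) • x + (1 / 2 : ℝ) • z)
  rw [hpar] at this
  nlinarith [mul_le_mul_of_nonneg_left hmid hη]

theorem inner_add_norm_sq_add_le {β : ℝ} {w a : E}
    (hx : IsProxPoint (1 / (2 * β)) f (w - (1 / (2 * β)) • a) x) (hf : ConvexOn ℝ univ f)
    (hβ : 0 < β) (z : E) :
    ⟪a, x - w⟫ + β * ‖x - w‖ ^ 2 + f x + β / 2 * ‖x - z‖ ^ 2
      ≤ ⟪a, z - w⟫ + β * ‖z - w‖ ^ 2 + f z := by
  have h := mul_le_mul_of_nonneg_left (hx.add_quarter_norm_sq_le hf (by positivity) z)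
    (by positivity : (0 : ℝ) ≤ 2 * β)
  rw [mul_add (2 * β) _ (1 / 4 * _), two_mul_prox_objective_eq hβ,
    two_mul_prox_objective_eq hβ] at h
  linarith

theorem noisy_prox_gradient_step_le [CompleteSpace E] {F0 f1 : E → ℝ} {β : ℝ} {w u x : E}
    (hx : IsProxPoint (1 / (2 * β)) f1 (w - (1 / (2 * β)) • (gradient F0 w + u)) x)
    (hF0 : Differentiable ℝ F0)
    (hsmooth : ∀ p q, ‖gradient F0 p - gradient F0 q‖ ≤ β * ‖p - q‖)
    (hf1 : ConvexOn ℝ univ f1) (hβ : 0 < β) (y : E) :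
    2 * (F0 x + f1 x - (F0 w + f1 w) - ‖u‖ ^ 2 / (2 * β))
      ≤ ⟪gradient F0 w, y - w⟫ + β / 2 * ‖y - w‖ ^ 2 + f1 y - f1 w := by
  set g := gradient F0 w
  set m := (1 / 2 : ℝ) • w + (1 / 2 : ℝ) • y
  have hmw : m - w = (1 / 2 : ℝ) • (y - w) := by module
  have hnorm_mw : ‖m - w‖ ^ 2 = 1 / 4 * ‖y - w‖ ^ 2 := by
    rw [hmw, norm_smul, mul_pow]; norm_num
  have hinner_mw : ⟪g + u, m - w⟫ = 1 / 2 * ⟪g, y - w⟫ + 1 / 2 * ⟪u, y - w⟫ := by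
    rw [hmw, real_inner_smul_right, inner_add_left]; ring
  have hinner_mx : ⟪u, m - x⟫ = 1 / 2 * ⟪u, y - w⟫ - ⟪u, x - w⟫ := by
    rw [show m - x = (1 / 2 : ℝ) • (y - w) - (x - w) by module, inner_sub_right,
      real_inner_smul_right]
  have hdescent := le_add_inner_gradient_add_norm_sq hF0 hsmooth w x
  have hgrowth := hx.inner_add_norm_sq_add_le hf1 hβ m
  rw [inner_add_left, hinner_mw, hnorm_mw, norm_sub_rev x m] at hgrowth
  have hmid := hf1.map_half_smul_add_half_smul_le (mem_univ w) (mem_univ y)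
  have hyoung := real_inner_le_half_mul_sq_add_sq_div hβ u (m - x)
  rw [hinner_mx] at hyoung
  linarith [mul_nonneg hβ.le (sq_nonneg ‖x - w‖)]

end IsProxPoint

theorem stmt10_general {d : ℕ} (β μ : ℝ) (hβ : 0 < β)
    (F0 f1 : EuclideanSpace ℝ (Fin d) → ℝ)
    (hdiff : Differentiable ℝ F0)
    (hsmooth : ∀ x y, ‖gradient F0 x - gradient F0 y‖ ≤ β * ‖x - y‖)
    (hconv : ConvexOn ℝ Set.univ f1)
    (Fstar : ℝ)
    (w u wplus : EuclideanSpace ℝ (Fin d))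
    (hPL : μ * (F0 w + f1 w - Fstar) ≤
      -β * ⨅ y, (⟪gradient F0 w, y - w⟫ + (β / 2) * ‖y - w‖ ^ 2 + f1 y - f1 w))
    (hwplus : ∀ v,
      (1 / (2 * β)) * f1 wplus
          + (1 / 2) * ‖wplus - (w - (1 / (2 * β)) • (gradient F0 w + u))‖ ^ 2
        ≤ (1 / (2 * β)) * f1 v
          + (1 / 2) * ‖v - (w - (1 / (2 * β)) • (gradient F0 w + u))‖ ^ 2) :
    F0 wplus + f1 wplus - Fstar
      ≤ (1 - μ / (2 * β)) * (F0 w + f1 w - Fstar) + ‖u‖ ^ 2 / (2 * β) := by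
  have hstep : 2 * (F0 wplus + f1 wplus - (F0 w + f1 w) - ‖u‖ ^ 2 / (2 * β))
      ≤ ⨅ y, (⟪gradient F0 w, y - w⟫ + (β / 2) * ‖y - w‖ ^ 2 + f1 y - f1 w) :=
    le_ciInf (IsProxPoint.noisy_prox_gradient_step_le hwplus hdiff hsmooth hconv hβ)
  have hdecrease : μ / (2 * β) * (F0 w + f1 w - Fstar)
      ≤ ‖u‖ ^ 2 / (2 * β) - (F0 wplus + f1 wplus - (F0 w + f1 w)) := by
    rw [div_mul_eq_mul_div, div_le_iff₀ (by positivity)]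
    linarith [mul_le_mul_of_nonneg_left hstep hβ.le]
  linarith

/-- Noisy proximal gradient step under the proximal-PL inequality: for `β`-smooth `F⁰`,
convex `f¹`, `F = F⁰ + f¹` bounded below with infimum `F*`, if
`μ(F(w) - F*) ≤ -β inf_y [⟪∇F⁰(w), y - w⟫ + (β/2)‖y-w‖² + f¹(y) - f¹(w)]` and
`wplus = prox_{(1/(2β))f¹}(w - (1/(2β))(∇F⁰(w) + u))`, then
`F(wplus) - F* ≤ (1 - μ/(2β))(F(w) - F*) + ‖u‖²/(2β)`. -/
theorem stmt10 {d : ℕ} (β μ : ℝ) (hβ : 0 < β) (hμ : 0 ≤ μ)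
    (F0 f1 : EuclideanSpace ℝ (Fin d) → ℝ)
    (hdiff : Differentiable ℝ F0)
    (hsmooth : ∀ x y, ‖gradient F0 x - gradient F0 y‖ ≤ β * ‖x - y‖)
    (hconv : ConvexOn ℝ Set.univ f1)
    (hbdd : BddBelow (Set.range fun v => F0 v + f1 v))
    (Fstar : ℝ) (hFstar : Fstar = ⨅ v, (F0 v + f1 v))
    (w u wplus : EuclideanSpace ℝ (Fin d))
    (hPL : μ * (F0 w + f1 w - Fstar) ≤
      -β * ⨅ y, (⟪gradient F0 w, y - w⟫ + (β / 2) * ‖y - w‖ ^ 2 + f1 y - f1 w))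
    (hwplus : ∀ v,
      (1 / (2 * β)) * f1 wplus
          + (1 / 2) * ‖wplus - (w - (1 / (2 * β)) • (gradient F0 w + u))‖ ^ 2
        ≤ (1 / (2 * β)) * f1 v
          + (1 / 2) * ‖v - (w - (1 / (2 * β)) • (gradient F0 w + u))‖ ^ 2) :
    F0 wplus + f1 wplus - Fstar
      ≤ (1 - μ / (2 * β)) * (F0 w + f1 w - Fstar) + ‖u‖ ^ 2 / (2 * β) :=
  stmt10_general β μ hβ F0 f1 hdiff hsmooth hconv Fstar w u wplus hPL hwplus
end

section
/- Let β > 0, τ ≥ 0, let F⁰ : ℝ^d → ℝ be β-smooth, let f¹ : ℝ^d → ℝ be convex, set F := F⁰ + f¹, and suppose F is bounded below with F* := inf_{w'∈ℝ^d} F(w'). Let η := 1/(2β), let R ≥ 1, let w_0 ∈ ℝ^d, and let h_0, …, h_{R−1} ∈ ℝ^d satisfy ‖h_r − ∇F⁰(w_r)‖ ≤ τ for all 0 ≤ r < R, where w_{r+1} := prox_{ηf¹}(w_r − η h_r). Then (1/R) Σ_{r=0}^{R−1} ‖(w_r − w_{r+1})/η‖² ≤ 8β(F(w_0) − F*)/R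 + 2τ², and consequently, with G_η(w) := (1/η)(w − prox_{ηf¹}(w − η ∇F⁰(w))) denoting the proximal gradient mapping, (1/R) Σ_{r=0}^{R−1} ‖G_η(w_r)‖² ≤ 16β(F(w_0) − F*)/R + 6τ². -/
/-! The descent lemma for `F⁰` and the subgradient inequality characterising the proximal point
give the sufficient decrease `F(w_{r+1}) + β‖w_{r+1} - w_r‖² ≤ F(w_r) + τ²/(2β)`, the gradient
error being absorbed by AM-GM. Telescoping and `F ≥ F*` bound the sum of the squared steps.
As the proximal map is nonexpansive, `G_η(w_r)` differs from the step `(w_r - w_{r+1})/η` by at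
most `τ`, which gives the second bound. -/

open Set Filter Topology Finset
open scoped RealInnerProductSpace

theorem Finset.sum_range_le_sub_add_nsmul {α : Type*} [AddCommGroup α] [PartialOrder α]
    [IsOrderedAddMonoid α] {Φ a : ℕ → α} {c : α} {R : ℕ}
    (h : ∀ r < R, Φ (r + 1) + a r ≤ Φ r + c) :
    ∑ r ∈ range R, a r ≤ Φ 0 - Φ R + R • c := by
  calc ∑ r ∈ range R, a r ≤ ∑ r ∈ range R, (Φ r - Φ (r + 1) + c) :=
        sum_le_sum fun r hr => by
          rw [sub_add_eq_add_sub, le_sub_iff_add_le, add_comm]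
          exact h r (mem_range.1 hr)
    _ = Φ 0 - Φ R + R • c := by rw [sum_add_distrib, sum_range_sub', sum_const, card_range]

theorem one_div_mul_le_div_add {S a b R : ℝ} (hR : 0 < R) (h : S ≤ a + R * b) :
    1 / R * S ≤ a / R + b := by
  rw [one_div_mul_eq_div, div_le_iff₀ hR, add_mul, div_mul_cancel₀ _ hR.ne']
  linarith

section Hilbert

variable {E : Type*} [NormedAddCommGroup E] [InnerProductSpace ℝ E]

theorem Differentiable.hasDerivAt_comp_add_smul [CompleteSpace E] {f : E → ℝ}
    (hf : Differentiable ℝ f) (x v : E) (t : ℝ) :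
    HasDerivAt (fun s : ℝ => f (x + s • v)) ⟪gradient f (x + t • v), v⟫ t := by
  have hline : HasDerivAt (fun s : ℝ => x + s • v) v t := by
    simpa using ((hasDerivAt_id t).smul_const v).const_add x
  have := (hf _).hasGradientAt.hasFDerivAt.comp_hasDerivAt t hline
  rwa [InnerProductSpace.toDual_apply_apply] at this

/-- The descent lemma. -/
theorem Differentiable.le_add_inner_gradient_add_sq [CompleteSpace E] {f : E → ℝ} {β : ℝ}
    (hf : Differentiable ℝ f) (hL : ∀ x y, ‖gradient f x - gradient f y‖ ≤ β * ‖x - y‖)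
    (x y : E) :
    f y ≤ f x + ⟪gradient f x, y - x⟫ + β / 2 * ‖y - x‖ ^ 2 := by
  set v := y - x
  set φ : ℝ → ℝ := fun t => f (x + t • v) - t * ⟪gradient f x, v⟫ - β / 2 * t ^ 2 * ‖v‖ ^ 2
  have hφ : ∀ t, HasDerivAt φ
      (⟪gradient f (x + t • v) - gradient f x, v⟫ - β * t * ‖v‖ ^ 2) t := by
    intro t
    have := ((hf.hasDerivAt_comp_add_smul x v t).sub
      ((hasDerivAt_id t).mul_const ⟪gradient f x, v⟫)).sub
      (((hasDerivAt_pow 2 t).const_mul (β / 2)).mul_const (‖v‖ ^ 2))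
    refine this.congr_deriv ?_
    rw [inner_sub_left, show (2 : ℕ) - 1 = 1 from rfl]
    push_cast
    ring
  have hanti : AntitoneOn φ (Icc 0 1) := by
    refine antitoneOn_of_deriv_nonpos (convex_Icc 0 1)
      (fun t _ => (hφ t).continuousAt.continuousWithinAt)
      (fun t _ => (hφ t).differentiableAt.differentiableWithinAt) fun t ht => ?_
    rw [interior_Icc] at ht
    have hgrad : ‖gradient f (x + t • v) - gradient f x‖ ≤ β * (t * ‖v‖) := by
      simpa [norm_smul, abs_of_pos ht.1] using hL (x + t • v) x
    rw [(hφ t).deriv, sub_nonpos]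
    calc ⟪gradient f (x + t • v) - gradient f x, v⟫
        ≤ ‖gradient f (x + t • v) - gradient f x‖ * ‖v‖ := real_inner_le_norm _ _
      _ ≤ β * (t * ‖v‖) * ‖v‖ := by gcongr
      _ = β * t * ‖v‖ ^ 2 := by ring
  have h01 := hanti (left_mem_Icc.2 zero_le_one) (right_mem_Icc.2 zero_le_one) zero_le_one
  simp only [φ, v, zero_smul, one_smul, add_zero, add_sub_cancel] at h01
  linarith

/-- First-order optimality of a proximal point: if `p` minimizes `g + ½‖· - z‖²` for a
convex `g`, then `z - p` is a subgradient of `g` at `p`. -/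
theorem ConvexOn.le_add_inner_of_isMinOn {g : E → ℝ} (hg : ConvexOn ℝ univ g) {z p : E}
    (hp : IsMinOn (fun v => g v + 1 / 2 * ‖v - z‖ ^ 2) univ p) (v : E) :
    g p ≤ g v + ⟪p - z, v - p⟫ := by
  set C := ⟪p - z, v - p⟫
  set D := ‖v - p‖ ^ 2
  have hsegment : ∀ t ∈ Ioo (0 : ℝ) 1, g p ≤ g v + C + t / 2 * D := by
    rintro t ⟨ht0, ht1⟩
    have hconv : g (p + t • (v - p)) ≤ (1 - t) * g p + t * g v := by
      rw [show p + t • (v - p) = (1 - t) • p + t • v by module]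
      exact hg.2 (mem_univ p) (mem_univ v) (sub_nonneg.2 ht1.le) ht0.le (sub_add_cancel 1 t)
    have hnorm : ‖p + t • (v - p) - z‖ ^ 2 = ‖p - z‖ ^ 2 + 2 * t * C + t ^ 2 * D := by
      rw [show p + t • (v - p) - z = (p - z) + t • (v - p) by abel, norm_add_sq_real,
        real_inner_smul_right, norm_smul, mul_pow, Real.norm_eq_abs, sq_abs]
      ring
    have hmin : g p + 1 / 2 * ‖p - z‖ ^ 2
        ≤ g (p + t • (v - p)) + 1 / 2 * ‖p + t • (v - p) - z‖ ^ 2 := hp (mem_univ _)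
    rw [hnorm] at hmin
    have : t * g p ≤ t * (g v + C + t / 2 * D) := by nlinarith
    exact le_of_mul_le_mul_left this ht0
  have hlim : Tendsto (fun t : ℝ => g v + C + t / 2 * D) (𝓝[>] 0) (𝓝 (g v + C)) := by
    have : Continuous fun t : ℝ => g v + C + t / 2 * D := by fun_prop
    simpa using (this.tendsto 0).mono_left nhdsWithin_le_nhds
  exact ge_of_tendsto hlim (eventually_of_mem (Ioo_mem_nhdsGT zero_lt_one) hsegment)

theorem ConvexOn.lipschitzWith_one_of_isMinOn {g : E → ℝ} (hg : ConvexOn ℝ univ g)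
    {P : E → E} (hP : ∀ z, IsMinOn (fun v => g v + 1 / 2 * ‖v - z‖ ^ 2) univ (P z)) :
    LipschitzWith 1 P := by
  refine LipschitzWith.of_dist_le_mul fun z₁ z₂ => ?_
  rw [NNReal.coe_one, one_mul, dist_eq_norm, dist_eq_norm]
  have h₁ := hg.le_add_inner_of_isMinOn (hP z₁) (P z₂)
  have h₂ := hg.le_add_inner_of_isMinOn (hP z₂) (P z₁)
  -- adding the two subgradient inequalities gives firm nonexpansiveness
  have hfirm : ‖P z₁ - P z₂‖ ^ 2 ≤ ⟪z₁ - z₂, P z₁ - P z₂⟫ := by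
    have : ⟪P z₁ - z₁, P z₂ - P z₁⟫ + ⟪P z₂ - z₂, P z₁ - P z₂⟫
        = ⟪z₁ - z₂, P z₁ - P z₂⟫ - ‖P z₁ - P z₂‖ ^ 2 := by
      rw [← real_inner_self_eq_norm_sq]
      simp only [inner_sub_left, inner_sub_right]
      ring
    linarith
  have hcs := real_inner_le_norm (z₁ - z₂) (P z₁ - P z₂)
  nlinarith [norm_nonneg (P z₁ - P z₂), norm_nonneg (z₁ - z₂)]

theorem norm_smul_sub_le_of_lipschitzWith_one {P : E → E} (hP : LipschitzWith 1 P) {L : ℝ}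
    (hL : 0 < L) (x g h : E) :
    ‖L • (x - P (x - (1 / L) • g))‖ ≤ ‖L • (x - P (x - (1 / L) • h))‖ + ‖g - h‖ := by
  set a := x - (1 / L) • g
  set b := x - (1 / L) • h
  have hPba : ‖L • (P b - P a)‖ ≤ ‖g - h‖ := by
    calc ‖L • (P b - P a)‖ = L * ‖P b - P a‖ := by rw [norm_smul, Real.norm_of_nonneg hL.le]
      _ ≤ L * ‖b - a‖ := by simpa using mul_le_mul_of_nonneg_left (hP.norm_sub_le b a) hL.le
      _ = ‖g - h‖ := by
        rw [show b - a = (1 / L) • (g - h) by module, norm_smul,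
          Real.norm_of_nonneg (by positivity), ← mul_assoc, mul_one_div_cancel hL.ne', one_mul]
  calc ‖L • (x - P a)‖ = ‖L • (x - P b) + L • (P b - P a)‖ := by rw [← smul_add, sub_add_sub_cancel]
    _ ≤ ‖L • (x - P b)‖ + ‖L • (P b - P a)‖ := norm_add_le _ _
    _ ≤ ‖L • (x - P b)‖ + ‖g - h‖ := by gcongr

theorem inexact_proxGrad_step_descent [CompleteSpace E] {F₀ f₁ : E → ℝ} {β τ : ℝ} (hβ : 0 < β)
    (hF₀ : Differentiable ℝ F₀) (hL : ∀ x y, ‖gradient F₀ x - gradient F₀ y‖ ≤ β * ‖x - y‖)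
    (hf₁ : ConvexOn ℝ univ f₁) {x h p : E} (hh : ‖h - gradient F₀ x‖ ≤ τ)
    (hp : IsMinOn (fun v => 1 / (2 * β) * f₁ v + 1 / 2 * ‖v - (x - (1 / (2 * β)) • h)‖ ^ 2)
      univ p) :
    F₀ p + f₁ p + β * ‖p - x‖ ^ 2 ≤ F₀ x + f₁ x + τ ^ 2 / (2 * β) := by
  set η := 1 / (2 * β)
  have hη : 0 < η := by positivity
  have hF₀p := hF₀.le_add_inner_gradient_add_sq hL x p
  have hprox : η * f₁ p ≤ η * f₁ x + ⟪p - (x - η • h), x - p⟫ :=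
    (hf₁.smul hη.le).le_add_inner_of_isMinOn hp x
  have hinner : ⟪p - (x - η • h), x - p⟫ = η * (-(2 * β) * ‖p - x‖ ^ 2 - ⟪h, p - x⟫) := by
    rw [show p - (x - η • h) = (p - x) + η • h by abel, show x - p = -(p - x) by abel,
      inner_neg_right, inner_add_left, real_inner_smul_left, real_inner_self_eq_norm_sq,
      real_inner_comm]
    have hηβ : η * (2 * β) = 1 := one_div_mul_cancel (by positivity)
    linear_combination ‖p - x‖ ^ 2 * hηβ
  have hf₁p : f₁ p ≤ f₁ x - 2 * β * ‖p - x‖ ^ 2 - ⟪h, p - x⟫ := by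
    refine le_of_mul_le_mul_left ?_ hη
    rw [hinner] at hprox
    linear_combination hprox
  have herr : ⟪gradient F₀ x - h, p - x⟫ ≤ τ ^ 2 / (2 * β) + β / 2 * ‖p - x‖ ^ 2 := by
    have hamgm : 0 ≤ (τ - β * ‖p - x‖) ^ 2 / (2 * β) := by positivity
    have hsq : (τ - β * ‖p - x‖) ^ 2 / (2 * β)
        = τ ^ 2 / (2 * β) + β / 2 * ‖p - x‖ ^ 2 - τ * ‖p - x‖ := by
      field_simp
      ring
    calc ⟪gradient F₀ x - h, p - x⟫ ≤ ‖gradient F₀ x - h‖ * ‖p - x‖ := real_inner_le_norm _ _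
      _ ≤ τ * ‖p - x‖ := by rw [norm_sub_rev]; gcongr
      _ ≤ τ ^ 2 / (2 * β) + β / 2 * ‖p - x‖ ^ 2 := by linarith
  rw [inner_sub_left] at herr
  linarith

theorem inexact_proxGrad_sum_sq_step_le [CompleteSpace E] {F₀ f₁ : E → ℝ} {β τ m : ℝ}
    (hβ : 0 < β) (hF₀ : Differentiable ℝ F₀)
    (hL : ∀ x y, ‖gradient F₀ x - gradient F₀ y‖ ≤ β * ‖x - y‖) (hf₁ : ConvexOn ℝ univ f₁)
    (hm : ∀ v, m ≤ F₀ v + f₁ v) {w h : ℕ → E} {R : ℕ}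
    (hh : ∀ r < R, ‖h r - gradient F₀ (w r)‖ ≤ τ)
    (hw : ∀ r < R, IsMinOn
      (fun v => 1 / (2 * β) * f₁ v + 1 / 2 * ‖v - (w r - (1 / (2 * β)) • h r)‖ ^ 2) univ
      (w (r + 1))) :
    ∑ r ∈ range R, ‖(2 * β) • (w r - w (r + 1))‖ ^ 2
      ≤ 4 * β * (F₀ (w 0) + f₁ (w 0) - m) + R * (2 * τ ^ 2) := by
  have hsum : ∑ r ∈ range R, β * ‖w (r + 1) - w r‖ ^ 2
      ≤ F₀ (w 0) + f₁ (w 0) - m + R * (τ ^ 2 / (2 * β)) := by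
    have := sum_range_le_sub_add_nsmul (Φ := fun r => F₀ (w r) + f₁ (w r))
      (a := fun r => β * ‖w (r + 1) - w r‖ ^ 2) fun r hr =>
        inexact_proxGrad_step_descent hβ hF₀ hL hf₁ (hh r hr) (hw r hr)
    rw [nsmul_eq_mul] at this
    linarith [hm (w R)]
  have hnorm (r : ℕ) : ‖(2 * β) • (w r - w (r + 1))‖ ^ 2
      = 4 * β * (β * ‖w (r + 1) - w r‖ ^ 2) := by
    rw [norm_smul, norm_sub_rev, mul_pow, Real.norm_eq_abs, sq_abs]
    ring
  rw [sum_congr rfl fun r _ => hnorm r, ← mul_sum]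
  calc 4 * β * ∑ r ∈ range R, β * ‖w (r + 1) - w r‖ ^ 2
      ≤ 4 * β * (F₀ (w 0) + f₁ (w 0) - m + R * (τ ^ 2 / (2 * β))) := by gcongr
    _ = 4 * β * (F₀ (w 0) + f₁ (w 0) - m) + R * (2 * τ ^ 2) := by
      field_simp
      ring

theorem sum_sq_norm_smul_sub_le_of_lipschitzWith_one {P : E → E} (hP : LipschitzWith 1 P)
    {L τ : ℝ} (hL : 0 < L) {w g h : ℕ → E} {R : ℕ} (hgh : ∀ r < R, ‖h r - g r‖ ≤ τ) :
    ∑ r ∈ range R, ‖L • (w r - P (w r - (1 / L) • g r))‖ ^ 2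
      ≤ 2 * ∑ r ∈ range R, ‖L • (w r - P (w r - (1 / L) • h r))‖ ^ 2 + R * (2 * τ ^ 2) := by
  calc _ ≤ ∑ r ∈ range R, (2 * ‖L • (w r - P (w r - (1 / L) • h r))‖ ^ 2 + 2 * τ ^ 2) :=
        sum_le_sum fun r hr => by
          have hG := norm_smul_sub_le_of_lipschitzWith_one hP hL (w r) (g r) (h r)
          rw [norm_sub_rev] at hG
          calc _ ≤ (‖L • (w r - P (w r - (1 / L) • h r))‖ + τ) ^ 2 := by
                gcongr
                exact hG.trans (by gcongr; exact hgh r (mem_range.1 hr))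
            _ ≤ 2 * (‖L • (w r - P (w r - (1 / L) • h r))‖ ^ 2 + τ ^ 2) := add_sq_le
            _ = _ := by ring
    _ = _ := by rw [sum_add_distrib, ← mul_sum, sum_const, card_range, nsmul_eq_mul]

end Hilbert

theorem stmt11_general {d : ℕ} (β τ : ℝ) (hβ : 0 < β)
    (F0 f1 : EuclideanSpace ℝ (Fin d) → ℝ)
    (hdiff : Differentiable ℝ F0)
    (hsmooth : ∀ x y, ‖gradient F0 x - gradient F0 y‖ ≤ β * ‖x - y‖)
    (hconv : ConvexOn ℝ Set.univ f1)
    (hbdd : BddBelow (Set.range fun v => F0 v + f1 v))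
    (Fstar : ℝ) (hFstar : Fstar = ⨅ v, (F0 v + f1 v))
    (R : ℕ) (hR : 1 ≤ R)
    (w h : ℕ → EuclideanSpace ℝ (Fin d))
    (proxF : EuclideanSpace ℝ (Fin d) → EuclideanSpace ℝ (Fin d))
    (hprox : ∀ z v, (1 / (2 * β)) * f1 (proxF z) + (1 / 2) * ‖proxF z - z‖ ^ 2
        ≤ (1 / (2 * β)) * f1 v + (1 / 2) * ‖v - z‖ ^ 2)
    (hherr : ∀ r < R, ‖h r - gradient F0 (w r)‖ ≤ τ)
    (hstep : ∀ r < R, w (r + 1) = proxF (w r - (1 / (2 * β)) • h r)) :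
    (1 / (R : ℝ)) * ∑ r ∈ Finset.range R, ‖(2 * β) • (w r - w (r + 1))‖ ^ 2
      ≤ 8 * β * (F0 (w 0) + f1 (w 0) - Fstar) / R + 2 * τ ^ 2 ∧
    (1 / (R : ℝ)) * ∑ r ∈ Finset.range R,
        ‖(2 * β) • (w r - proxF (w r - (1 / (2 * β)) • gradient F0 (w r)))‖ ^ 2
      ≤ 16 * β * (F0 (w 0) + f1 (w 0) - Fstar) / R + 6 * τ ^ 2 := by
  have hRpos : (0 : ℝ) < R := by exact_mod_cast hR
  have hFstar_le (v) : Fstar ≤ F0 v + f1 v := hFstar ▸ ciInf_le hbdd v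
  have hgap : 0 ≤ β * (F0 (w 0) + f1 (w 0) - Fstar) :=
    mul_nonneg hβ.le (sub_nonneg.2 (hFstar_le (w 0)))
  have hS1 := inexact_proxGrad_sum_sq_step_le hβ hdiff hsmooth hconv hFstar_le hherr
    fun r hr => hstep r hr ▸ fun v _ => hprox _ v
  have hP : LipschitzWith 1 proxF :=
    (hconv.smul (by positivity : (0 : ℝ) ≤ 1 / (2 * β))).lipschitzWith_one_of_isMinOn
      fun z v _ => hprox z v
  have hS2 := sum_sq_norm_smul_sub_le_of_lipschitzWith_one hP (by positivity : 0 < 2 * β)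
    (w := w) (g := fun r => gradient F0 (w r)) hherr
  have hsteps : ∑ r ∈ range R, ‖(2 * β) • (w r - proxF (w r - (1 / (2 * β)) • h r))‖ ^ 2
      = ∑ r ∈ range R, ‖(2 * β) • (w r - w (r + 1))‖ ^ 2 :=
    sum_congr rfl fun r hr => by rw [hstep r (mem_range.1 hr)]
  rw [hsteps] at hS2
  exact ⟨one_div_mul_le_div_add hRpos (by linarith),
    one_div_mul_le_div_add hRpos (by linarith)⟩

/-- Inexact proximal gradient method with step size `η = 1/(2β)`: if the gradient
estimates satisfy `‖h_r - ∇F⁰(w_r)‖ ≤ τ` and `w_{r+1} = prox_{ηf¹}(w_r - η h_r)`, then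
the averaged squared step norms `(1/R) ∑ ‖(w_r - w_{r+1})/η‖²` are at most
`8β(F(w_0) - F*)/R + 2τ²`, and the averaged squared proximal gradient mapping norms
`(1/R) ∑ ‖G_η(w_r)‖²` are at most `16β(F(w_0) - F*)/R + 6τ²`. -/
theorem stmt11 {d : ℕ} (β τ : ℝ) (hβ : 0 < β) (hτ : 0 ≤ τ)
    (F0 f1 : EuclideanSpace ℝ (Fin d) → ℝ)
    (hdiff : Differentiable ℝ F0)
    (hsmooth : ∀ x y, ‖gradient F0 x - gradient F0 y‖ ≤ β * ‖x - y‖)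
    (hconv : ConvexOn ℝ Set.univ f1)
    (hbdd : BddBelow (Set.range fun v => F0 v + f1 v))
    (Fstar : ℝ) (hFstar : Fstar = ⨅ v, (F0 v + f1 v))
    (R : ℕ) (hR : 1 ≤ R)
    (w h : ℕ → EuclideanSpace ℝ (Fin d))
    (proxF : EuclideanSpace ℝ (Fin d) → EuclideanSpace ℝ (Fin d))
    (hprox : ∀ z v, (1 / (2 * β)) * f1 (proxF z) + (1 / 2) * ‖proxF z - z‖ ^ 2
        ≤ (1 / (2 * β)) * f1 v + (1 / 2) * ‖v - z‖ ^ 2)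
    (hherr : ∀ r < R, ‖h r - gradient F0 (w r)‖ ≤ τ)
    (hstep : ∀ r < R, w (r + 1) = proxF (w r - (1 / (2 * β)) • h r)) :
    (1 / (R : ℝ)) * ∑ r ∈ Finset.range R, ‖(2 * β) • (w r - w (r + 1))‖ ^ 2
      ≤ 8 * β * (F0 (w 0) + f1 (w 0) - Fstar) / R + 2 * τ ^ 2 ∧
    (1 / (R : ℝ)) * ∑ r ∈ Finset.range R,
        ‖(2 * β) • (w r - proxF (w r - (1 / (2 * β)) • gradient F0 (w r)))‖ ^ 2
      ≤ 16 * β * (F0 (w 0) + f1 (w 0) - Fstar) / R + 6 * τ ^ 2 :=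
  stmt11_general β τ hβ F0 f1 hdiff hsmooth hconv hbdd Fstar hFstar R hR w h proxF hprox hherr hstep
end

section
/- Let β > 0 and let n, K, M be positive integers with K ≤ n. Set q := K/n, Q := ⌊n/K⌋, and η := (1/(8β))·min(1, K^{3/2}·√M / n). Define c_Q := 0 and c_t := (1 + q)·c_{t+1} + 4ηβ²/(MK) for 0 ≤ t < Q. Then for every t ∈ {0, …, Q − 1}: β/2 + c_{t+1}·(1 + n/K) ≤ 1/(2η). In particular c_t ≤ 8ηβ²n/(MK²) for all 0 ≤ t ≤ Q. -/
set_option maxHeartbeats 1000000 in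
/-- Step-size condition for ISRL-DP Prox-SVRG: with `q = K/n`, `Q = ⌊n/K⌋`,
`η = (1/(8β)) min(1, K^{3/2}√M/n)`, `c_Q = 0` and
`c_t = (1+q) c_{t+1} + 4ηβ²/(MK)` for `t < Q`, we have
`β/2 + c_{t+1}(1 + n/K) ≤ 1/(2η)` for all `t < Q`, and in particular
`c_t ≤ 8ηβ²n/(MK²)` for all `t ≤ Q`. -/
theorem stmt12 (β : ℝ) (hβ : 0 < β) (n K M : ℕ)
    (hn : 0 < n) (hK : 0 < K) (hM : 0 < M) (hKn : K ≤ n)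
    (q η : ℝ) (hq : q = (K : ℝ) / n)
    (hη : η = (1 / (8 * β)) * min 1 ((K : ℝ) ^ ((3 : ℝ) / 2) * Real.sqrt M / n))
    (Q : ℕ) (hQ : Q = n / K)
    (c : ℕ → ℝ) (hcQ : c Q = 0)
    (hrec : ∀ t < Q, c t = (1 + q) * c (t + 1) + 4 * η * β ^ 2 / ((M : ℝ) * K)) :
    (∀ t < Q, β / 2 + c (t + 1) * (1 + (n : ℝ) / K) ≤ 1 / (2 * η)) ∧
    (∀ t ≤ Q, c t ≤ 8 * η * β ^ 2 * n / ((M : ℝ) * (K : ℝ) ^ 2)) := by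
  have hn' : (0:ℝ) < n := by exact_mod_cast hn
  have hK' : (0:ℝ) < K := by exact_mod_cast hK
  have hM' : (0:ℝ) < M := by exact_mod_cast hM
  have hKn' : (K:ℝ) ≤ n := by exact_mod_cast hKn
  have hA0 : 0 < (K : ℝ) ^ ((3 : ℝ) / 2) * Real.sqrt M / n := by positivity
  have hη0 : 0 < η := by
    rw [hη]; exact mul_pos (by positivity) (lt_min one_pos hA0)
  have hq0 : 0 < q := by rw [hq]; positivity
  have hηβ : η * β ≤ 1 / 8 := by
    rw [hη]
    have h1 : min 1 ((K : ℝ) ^ ((3 : ℝ) / 2) * Real.sqrt M / n) ≤ 1 := min_le_left _ _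
    have h2 : (1 / (8 * β)) * min 1 ((K : ℝ) ^ ((3 : ℝ) / 2) * Real.sqrt M / n) * β
        ≤ (1 / (8 * β)) * 1 * β := by
      gcongr
    calc _ ≤ (1 / (8 * β)) * 1 * β := h2
    _ = 1/8 := by field_simp
  have hηβA : η * β ≤ (K : ℝ) ^ ((3 : ℝ) / 2) * Real.sqrt M / (8 * n) := by
    rw [hη]
    have h1 : min 1 ((K : ℝ) ^ ((3 : ℝ) / 2) * Real.sqrt M / n)
        ≤ (K : ℝ) ^ ((3 : ℝ) / 2) * Real.sqrt M / n := min_le_right _ _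
    have h2 : (1 / (8 * β)) * min 1 ((K : ℝ) ^ ((3 : ℝ) / 2) * Real.sqrt M / n) * β
        ≤ (1 / (8 * β)) * ((K : ℝ) ^ ((3 : ℝ) / 2) * Real.sqrt M / n) * β := by
      gcongr
    calc _ ≤ (1 / (8 * β)) * ((K : ℝ) ^ ((3 : ℝ) / 2) * Real.sqrt M / n) * β := h2
    _ = (K : ℝ) ^ ((3 : ℝ) / 2) * Real.sqrt M / (8 * n) := by field_simp
  -- key squared inequality: 64 n² (ηβ)² ≤ K³ M
  have hsq : 64 * (n:ℝ)^2 * (η*β)^2 ≤ (K:ℝ)^3 * M := by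
    have h8 : (0:ℝ) < 8 * n := by positivity
    have h1 : (η * β) * (8 * n) ≤ (K : ℝ) ^ ((3 : ℝ) / 2) * Real.sqrt M := by
      rw [← le_div_iff₀ h8]; exact hηβA
    have h2 : ((η * β) * (8 * n))^2 ≤ ((K : ℝ) ^ ((3 : ℝ) / 2) * Real.sqrt M)^2 :=
      pow_le_pow_left₀ (by positivity) h1 2
    have h3 : ((K : ℝ) ^ ((3 : ℝ) / 2) * Real.sqrt M)^2 = (K:ℝ)^3 * M := by
      rw [mul_pow, Real.sq_sqrt hM'.le]
      congr 1
      rw [← Real.rpow_natCast ((K:ℝ) ^ ((3 : ℝ) / 2)) 2, ← Real.rpow_mul hK'.le,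
        show (3:ℝ)/2*((2:ℕ):ℝ) = ((3:ℕ):ℝ) by push_cast; norm_num, Real.rpow_natCast]
    nlinarith [h2, h3]
  have hQn : (K:ℝ) * Q ≤ n := by
    have := Nat.div_mul_le_self n K
    rw [hQ]
    calc (K:ℝ) * (n / K : ℕ) = ((n / K) * K : ℕ) := by push_cast; ring
    _ ≤ (n:ℝ) := by exact_mod_cast this
  set D := 4 * η * β ^ 2 / ((M : ℝ) * K) with hD
  have hD0 : 0 < D := by rw [hD]; positivity
  have hform : ∀ k : ℕ, ∀ t, t + k = Q → c t = D * ((1+q)^k - 1) / q := by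
    intro k
    induction k with
    | zero => intro t ht; simp at ht; simp [ht, hcQ]
    | succ m ih =>
      intro t ht
      have htQ : t < Q := by omega
      have h1 : c (t+1) = D * ((1+q)^m - 1) / q := ih (t+1) (by omega)
      rw [hrec t htQ, h1]
      field_simp
      ring
  have hpow : ∀ k : ℕ, k ≤ Q → (1+q)^k ≤ 3 := by
    intro k hk
    have h1 : (1+q)^k ≤ Real.exp q ^ k := by
      apply pow_le_pow_left₀ (by positivity)
      linarith [Real.add_one_le_exp q]
    have h2 : Real.exp q ^ k = Real.exp (k * q) := (Real.exp_nat_mul q k).symm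
    have hk' : (K:ℝ) * k ≤ n := by
      have hkQ : (k:ℝ) ≤ Q := by exact_mod_cast hk
      have := hQn
      nlinarith
    have h3 : (k:ℝ) * q ≤ 1 := by
      rw [hq]
      calc (k:ℝ) * ((K:ℝ)/n) = (K:ℝ) * k / n := by ring
        _ ≤ 1 := by rw [div_le_one hn']; exact hk'
    have h4 : Real.exp ((k:ℝ) * q) ≤ Real.exp 1 := Real.exp_le_exp.mpr h3
    have h5 : Real.exp 1 ≤ 3 := by
      have := Real.exp_one_lt_d9
      linarith
    calc (1+q)^k ≤ Real.exp q ^ k := h1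
    _ = Real.exp ((k:ℝ) * q) := h2
    _ ≤ 3 := le_trans h4 h5
  have hbound : ∀ t ≤ Q, 0 ≤ c t ∧ c t ≤ 8 * η * β ^ 2 * n / ((M : ℝ) * (K : ℝ) ^ 2) := by
    intro t ht
    have hform' : c t = D * ((1+q)^(Q - t) - 1) / q := hform (Q - t) t (by omega)
    have hp1 : (1:ℝ) ≤ (1+q)^(Q-t) := one_le_pow₀ (by linarith)
    have hp3 : (1+q)^(Q-t) ≤ 3 := hpow (Q - t) (by omega)
    constructor
    · rw [hform']
      exact div_nonneg (mul_nonneg hD0.le (by linarith)) hq0.le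
    · rw [hform']
      have heq : D * 2 / q = 8 * η * β ^ 2 * n / ((M : ℝ) * (K : ℝ) ^ 2) := by
        rw [hD, hq]; field_simp; ring
      calc D * ((1+q)^(Q-t) - 1) / q ≤ D * 2 / q := by gcongr; linarith
      _ = _ := heq
  refine ⟨?_, fun t ht => (hbound t ht).2⟩
  intro t ht
  have hct := hbound (t+1) (by omega)
  have h2ηpos : (0:ℝ) < 2 * η := by linarith
  have hfr : (1:ℝ) + (n:ℝ)/K ≤ 2 * ((n:ℝ)/K) := by
    have : (1:ℝ) ≤ (n:ℝ)/K := by rw [le_div_iff₀ hK']; linarith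
    linarith
  have hstep : c (t+1) * (1 + (n:ℝ)/K) ≤ 16 * η * β^2 * n^2 / ((M:ℝ) * K^3) := by
    calc c (t+1) * (1 + (n:ℝ)/K) ≤ (8 * η * β ^ 2 * n / ((M : ℝ) * (K : ℝ) ^ 2)) * (2 * ((n:ℝ)/K)) := by
          apply mul_le_mul hct.2 hfr (by positivity) (by positivity)
    _ = 16 * η * β^2 * n^2 / ((M:ℝ) * K^3) := by field_simp; ring
  have hmain : β / 2 + 16 * η * β^2 * n^2 / ((M:ℝ) * K^3) ≤ 1 / (2 * η) := by
    rw [le_div_iff₀ h2ηpos]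
    have hhalf : 32 * η^2 * β^2 * (n:ℝ)^2 ≤ ((M:ℝ) * K^3) / 2 := by nlinarith [hsq]
    have hMK : (0:ℝ) < (M:ℝ) * K^3 := by positivity
    have : 16 * η * β^2 * (n:ℝ)^2 / ((M:ℝ) * K^3) * (2*η) ≤ 1/2 := by
      rw [div_mul_eq_mul_div, div_le_iff₀ hMK]
      nlinarith [hhalf]
    nlinarith [hηβ, this]
  linarith [hstep]
end
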